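/- Let Σ be a finite alphabet and S,T ⊆ Σ^* languages of finite words. Then Ψ(S·T^ω) = Ψ(S·T^*) + I(T), where the right-hand side denotes {Ψ(y) + m : y ∈ S·T^*, m ∈ I(T)}. -/

import Mathlib

open scoped Classical

/-- A (nondeterministic) Büchi automaton over alphabet `A`, with a finite state set. -/
structure BuchiAutomaton (A : Type) : Type 1 where
  Q : Type
  fin : Fintype Q
  step : Q → A → Set Q
  init : Set Q
  accept : Set Q

attribute [instance] BuchiAutomaton.fin

/-- A run of the automaton on an infinite word. -/
def BuchiAutomaton.IsRun {A : Type} (M : BuchiAutomaton A) (w : ℕ → A) (ρ : ℕ → M.Q) : Prop :=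
  ρ 0 ∈ M.init ∧ ∀ i, ρ (i + 1) ∈ M.step (ρ i) (w i)

/-- The language of a Büchi automaton: words admitting a run visiting the accepting set
infinitely often. -/
def BuchiAutomaton.lang {A : Type} (M : BuchiAutomaton A) : Set (ℕ → A) :=
  {w | ∃ ρ, M.IsRun w ρ ∧ ∀ n, ∃ m, n ≤ m ∧ ρ m ∈ M.accept}

/-- A Büchi automaton is deterministic if it has a unique initial state and
every transition set is a singleton. -/
def BuchiAutomaton.Deterministic {A : Type} (M : BuchiAutomaton A) : Prop :=
  (∃ q, M.init = {q}) ∧ ∀ q a, ∃ p, M.step q a = {p}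

/-- Parikh image of an infinite word: number of occurrences of each letter (`⊤` if infinite). -/
noncomputable def parikhInf {A : Type} (w : ℕ → A) : A → ℕ∞ :=
  fun a => {i : ℕ | w i = a}.encard

/-- The jumping language of a Büchi automaton. -/
def JumpLang {A : Type} (M : BuchiAutomaton A) : Set (ℕ → A) :=
  {w | ∃ w', parikhInf w' = parikhInf w ∧ w' ∈ M.lang}

/-- Number of occurrences of letter `a` in the `i`-th window of size `k` of `w`. -/
noncomputable def winCount {A : Type} (w : ℕ → A) (k i : ℕ) (a : A) : ℕ :=
  {j : ℕ | k * i ≤ j ∧ j < k * i + k ∧ w j = a}.ncard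

/-- `w` and `w'` are `k`-window permutations of each other. -/
def KWinPerm {A : Type} (k : ℕ) (w w' : ℕ → A) : Prop :=
  ∀ i a, winCount w k i a = winCount w' k i a

/-- The `k`-window jumping language of a Büchi automaton. -/
def KWinLang {A : Type} (M : BuchiAutomaton A) (k : ℕ) : Set (ℕ → A) :=
  {w | ∃ w', KWinPerm k w' w ∧ w' ∈ M.lang}

/-- The `∃`-window jumping language of a Büchi automaton. -/
def EWinLang {A : Type} (M : BuchiAutomaton A) : Set (ℕ → A) :=
  {w | ∃ k, 1 ≤ k ∧ ∃ w', KWinPerm k w' w ∧ w' ∈ M.lang}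

/-- Linear subsets of `ℕ^A`. -/
def IsLinearSetPi {A : Type} (R : Set (A → ℕ)) : Prop :=
  ∃ (b : A → ℕ) (P : Finset (A → ℕ)),
    R = {v | ∃ c : (A → ℕ) → ℕ, v = b + ∑ p ∈ P, c p • p}

/-- Semilinear sets: finite unions of linear sets. -/
def IsSemilinearSetPi {A : Type} (R : Set (A → ℕ)) : Prop :=
  ∃ (n : ℕ) (f : Fin n → Set (A → ℕ)), (∀ i, IsLinearSetPi (f i)) ∧ R = ⋃ i, f i

/-- A mask: a vector over `{0,∞}` with at least one `∞` coordinate. -/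
def IsMask {A : Type} (m : A → ℕ∞) : Prop :=
  (∀ a, m a = 0 ∨ m a = ⊤) ∧ ∃ a, m a = ⊤

/-- Adding a mask to a vector of naturals. -/
def maskAdd {A : Type} (x : A → ℕ) (m : A → ℕ∞) : A → ℕ∞ :=
  fun a => (x a : ℕ∞) + m a

/-- Adding a mask to a set of vectors, `R + m`. -/
def maskAddSet {A : Type} (R : Set (A → ℕ)) (m : A → ℕ∞) : Set (A → ℕ∞) :=
  (fun x => maskAdd x m) '' R

/-- `𝕄^A`: extended-natural vectors with at least one `∞` coordinate. -/
def MVecs (A : Type) : Set (A → ℕ∞) := {v | ∃ a, v a = ⊤}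

/-- Masked semilinear set: a union `⋃_m (S_m + m)` over all masks `m`, with each `S_m`
semilinear. -/
def IsMaskedSemilinear {A : Type} (S : Set (A → ℕ∞)) : Prop :=
  ∃ F : (A → ℕ∞) → Set (A → ℕ),
    (∀ m, IsMask m → IsSemilinearSetPi (F m)) ∧
    S = ⋃ m ∈ {m' : A → ℕ∞ | IsMask m'}, maskAddSet (F m) m

/-- `R` is `m`-oblivious: membership only depends on the `m`-equivalence class. -/
def MOblivious {A : Type} (m : A → ℕ∞) (R : Set (A → ℕ)) : Prop :=
  ∀ u v : A → ℕ, maskAdd u m = maskAdd v m → (u ∈ R ↔ v ∈ R)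

/-- `E_m`: unit vectors at the `∞` coordinates of the mask `m`. -/
noncomputable def maskUnits {A : Type} [Fintype A] [DecidableEq A] (m : A → ℕ∞) :
    Finset (A → ℕ) :=
  (Finset.univ.filter (fun a => m a = ⊤)).image (fun a => Pi.single a 1)

/-- `R` is in canonical `m`-oblivious form. -/
def CanonicalOblivious {A : Type} [Fintype A] [DecidableEq A] (m : A → ℕ∞)
    (R : Set (A → ℕ)) : Prop :=
  ∃ (n : ℕ) (b : Fin n → (A → ℕ)) (P : Fin n → Finset (A → ℕ)),
    (∀ i a, m a = ⊤ → b i a = 0) ∧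
    (∀ i p, p ∈ P i → ∀ a, m a = ⊤ → p a = 0) ∧
    R = ⋃ i, {v | ∃ c : (A → ℕ) → ℕ, v = b i + ∑ p ∈ (P i ∪ maskUnits m), c p • p}

/-- The finite prefix `x · y₀ · y₁ ⋯ y_{j-1}` of the infinite concatenation. -/
def catPrefix {A : Type} (x : List A) (y : ℕ → List A) : ℕ → List A
  | 0 => x
  | j + 1 => catPrefix x y j ++ y j

/-- Membership of an infinite word `w` in `S · T^ω`: `w = x · y₁ y₂ ⋯` with `x ∈ S` and all
`y_j ∈ T`. -/
def InOmegaCat {A : Type} (S T : Language A) (w : ℕ → A) : Prop :=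
  ∃ (x : List A) (y : ℕ → List A),
    x ∈ S ∧ (∀ j, y j ∈ T) ∧
    (∀ n : ℕ, ∃ j, n < (catPrefix x y j).length) ∧
    (∀ j i (h : i < (catPrefix x y j).length), (catPrefix x y j).get ⟨i, h⟩ = w i)

/-- Parikh image of a finite word. -/
def parikhFin {A : Type} [DecidableEq A] (x : List A) : A → ℕ :=
  fun a => x.count a

/-- The mask `m_Γ` associated with a set of letters `Γ`. -/
noncomputable def maskOf {A : Type} (Γ : Set A) : A → ℕ∞ :=
  fun a => if a ∈ Γ then ⊤ else 0

/-- `I(T)`: the masks `m_Γ` for nonempty `Γ ⊆ Σ` such that every letter of `Γ` occurs in some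
word of `T ∩ Γ^*`. -/
def ITset {A : Type} (T : Language A) : Set (A → ℕ∞) :=
  {m | ∃ Γ : Set A, Γ.Nonempty ∧ m = maskOf Γ ∧
        ∀ a ∈ Γ, ∃ x ∈ T, (∀ b ∈ x, b ∈ Γ) ∧ a ∈ x}


/-!
Write `w = x · y₀ y₁ ⋯` and let `Γ` be the set of letters occurring in infinitely many
blocks `yⱼ`; these are exactly the letters occurring infinitely often in `w`. As the
alphabet is finite, all blocks from some `N` on are words over `Γ`, so
`Ψ(w) = Ψ(x y₀ ⋯ y_{N-1}) + m_Γ`, and these late blocks witness `m_Γ ∈ I(T)` (`Γ` is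
nonempty because `w` is infinite). Conversely, given `x y₁ ⋯ yᵣ ∈ S·T^*` and
`m_Γ ∈ I(T)`, continue it by the witness words of the letters of `Γ`, each repeated
infinitely often.
-/

open Filter

variable {A : Type}

theorem exists_nat_forall_frequently_eq (α : Type*) [Nonempty α] [Countable α] :
    ∃ c : ℕ → α, ∀ a, ∃ᶠ k in atTop, c k = a := by
  obtain ⟨f, hf⟩ := exists_surjective_nat α
  refine ⟨fun k => f k.unpair.1, fun a => ?_⟩
  obtain ⟨m, rfl⟩ := hf a
  exact frequently_atTop.2 fun n => ⟨Nat.pair m n, Nat.right_le_pair m n, by simp⟩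

theorem encard_setOf_lt_and_eq [DecidableEq A] (w : ℕ → A) (n : ℕ) (a : A) :
    {i | i < n ∧ w i = a}.encard = ((List.range n).map w).count a := by
  induction n with
  | zero => simp
  | succ n ih =>
    by_cases h : w n = a
    · have : {i | i < n + 1 ∧ w i = a} = insert n {i | i < n ∧ w i = a} := by
        ext i; grind
      rw [this, Set.encard_insert_of_notMem (by simp), ih]
      simp [List.range_succ, h]
    · have : {i | i < n + 1 ∧ w i = a} = {i | i < n ∧ w i = a} := by
        ext i; grind
      rw [this, ih]
      simp [List.range_succ, h]

section catPrefix

variable (x : List A) (y : ℕ → List A)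

theorem catPrefix_eq_append_flatten (j : ℕ) :
    catPrefix x y j = x ++ ((List.range j).map y).flatten := by
  induction j with
  | zero => simp [catPrefix]
  | succ j ih => simp [catPrefix, ih, List.range_succ]

theorem catPrefix_mem_mul_kstar {S T : Language A} {x : List A} {y : ℕ → List A} (hx : x ∈ S)
    (hy : ∀ j, y j ∈ T) (j : ℕ) : catPrefix x y j ∈ S * KStar.kstar T := by
  rw [catPrefix_eq_append_flatten]
  exact Language.append_mem_mul hx (Language.mem_kstar.2 ⟨_, rfl, by simp [hy]⟩)

theorem catPrefix_prefix_catPrefix {j j' : ℕ} (h : j ≤ j') :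
    catPrefix x y j <+: catPrefix x y j' := by
  induction j', h using Nat.le_induction with
  | base => exact List.prefix_refl _
  | succ n _ ih => exact ih.trans (List.prefix_append _ _)

theorem length_catPrefix_succ (j : ℕ) :
    (catPrefix x y (j + 1)).length = (catPrefix x y j).length + (y j).length :=
  List.length_append

theorem monotone_length_catPrefix : Monotone fun j => (catPrefix x y j).length :=
  fun _ _ h => (catPrefix_prefix_catPrefix x y h).length_le

theorem unbounded_length_catPrefix_iff :
    (∀ n, ∃ j, n < (catPrefix x y j).length) ↔ ∃ᶠ j in atTop, y j ≠ [] := by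
  constructor
  · intro h hnil
    obtain ⟨N, hN⟩ := eventually_atTop.1 (hnil.mono fun _ => not_not.1)
    have hstable : ∀ j, N ≤ j → catPrefix x y j = catPrefix x y N := by
      intro j hj
      induction j, hj using Nat.le_induction with
      | base => rfl
      | succ j hj ih => rw [catPrefix, ih, hN j hj, List.append_nil]
    obtain ⟨j, hj⟩ := h (catPrefix x y N).length
    rcases le_total j N with hjN | hNj
    · exact (monotone_length_catPrefix x y hjN).not_gt hj
    · rw [hstable j hNj] at hj
      exact lt_irrefl _ hj
  · intro h n
    suffices ∀ n, ∃ j, n ≤ (catPrefix x y j).length from this (n + 1)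
    intro n
    induction n with
    | zero => exact ⟨0, Nat.zero_le _⟩
    | succ n ih =>
      obtain ⟨j₀, hj₀⟩ := ih
      obtain ⟨j, hj₀j, hj⟩ := frequently_atTop.1 h j₀
      have : (catPrefix x y j₀).length ≤ (catPrefix x y j).length :=
        monotone_length_catPrefix x y hj₀j
      have := List.length_pos_iff.2 hj
      exact ⟨j + 1, by rw [length_catPrefix_succ]; omega⟩

end catPrefix

def IsOmegaConcat (x : List A) (y : ℕ → List A) (w : ℕ → A) : Prop :=
  (∀ n, ∃ j, n < (catPrefix x y j).length) ∧
    ∀ j i (h : i < (catPrefix x y j).length), (catPrefix x y j)[i] = w i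

theorem inOmegaCat_iff {S T : Language A} {w : ℕ → A} :
    InOmegaCat S T w ↔ ∃ x y, x ∈ S ∧ (∀ j, y j ∈ T) ∧ IsOmegaConcat x y w :=
  Iff.rfl

theorem exists_isOmegaConcat {x : List A} {y : ℕ → List A}
    (h : ∀ n, ∃ j, n < (catPrefix x y j).length) : ∃ w, IsOmegaConcat x y w := by
  refine ⟨fun i => (catPrefix x y (Nat.find (h i)))[i]'(Nat.find_spec (h i)), h, ?_⟩
  intro j i hi
  rcases le_total j (Nat.find (h i)) with hj | hj
  · exact (catPrefix_prefix_catPrefix x y hj).getElem hi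
  · exact ((catPrefix_prefix_catPrefix x y hj).getElem _).symm

namespace IsOmegaConcat

variable {x : List A} {y : ℕ → List A} {w : ℕ → A}

theorem catPrefix_eq_map_range (hw : IsOmegaConcat x y w) (j : ℕ) :
    catPrefix x y j = (List.range (catPrefix x y j).length).map w :=
  List.ext_getElem (by simp) fun i h _ => by simp [hw.2 j i h]

theorem exists_ge_length_eq (hw : IsOmegaConcat x y w) {j : ℕ} {a : A} (ha : a ∈ y j) :
    ∃ i, (catPrefix x y j).length ≤ i ∧ w i = a := by
  obtain ⟨k, hk, rfl⟩ := List.getElem_of_mem ha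
  have hlt : (catPrefix x y j).length + k < (catPrefix x y (j + 1)).length := by
    rw [length_catPrefix_succ]; omega
  refine ⟨_, Nat.le_add_right _ k, ?_⟩
  rw [← hw.2 (j + 1) _ hlt]
  simp [catPrefix, List.getElem_append_right]

theorem exists_ge_mem (hw : IsOmegaConcat x y w) {N i : ℕ}
    (hi : (catPrefix x y N).length ≤ i) : ∃ j, N ≤ j ∧ w i ∈ y j := by
  have hex : ∃ j, i < (catPrefix x y j).length := hw.1 i
  obtain ⟨j, hj⟩ : ∃ j, Nat.find hex = j + 1 :=
    Nat.exists_eq_succ_of_ne_zero fun h0 => by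
      have := Nat.find_spec hex
      rw [h0] at this
      have : (catPrefix x y 0).length ≤ (catPrefix x y N).length :=
        monotone_length_catPrefix x y (Nat.zero_le N)
      omega
  have hlt : i < (catPrefix x y (j + 1)).length := hj ▸ Nat.find_spec hex
  have hle : (catPrefix x y j).length ≤ i :=
    not_lt.1 (Nat.find_min hex (by omega))
  have hNj : N ≤ j := by
    by_contra hjN
    have : (catPrefix x y (j + 1)).length ≤ (catPrefix x y N).length :=
      monotone_length_catPrefix x y (by omega)
    omega
  refine ⟨j, hNj, ?_⟩
  rw [← hw.2 (j + 1) i hlt]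
  simp only [catPrefix, List.getElem_append_right hle]
  exact List.getElem_mem _

theorem parikhInf_eq_count [DecidableEq A] (hw : IsOmegaConcat x y w) {N : ℕ} {a : A}
    (ha : ∀ j, N ≤ j → a ∉ y j) : parikhInf w a = (catPrefix x y N).count a := by
  have hlt : ∀ i, w i = a → i < (catPrefix x y N).length := fun i hi => by
    by_contra hle
    obtain ⟨j, hNj, hj⟩ := hw.exists_ge_mem (not_lt.1 hle)
    exact ha j hNj (hi ▸ hj)
  have : {i | w i = a} = {i | i < (catPrefix x y N).length ∧ w i = a} := by
    ext i; exact ⟨fun h => ⟨hlt i h, h⟩, And.right⟩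
  rw [parikhInf, this, encard_setOf_lt_and_eq, ← hw.catPrefix_eq_map_range]

theorem parikhInf_eq_top (hw : IsOmegaConcat x y w) {a : A} (ha : ∃ᶠ j in atTop, a ∈ y j) :
    parikhInf w a = ⊤ := by
  refine Set.Infinite.encard_eq (Set.infinite_of_forall_exists_gt fun n => ?_)
  obtain ⟨j₀, hj₀⟩ := hw.1 n
  obtain ⟨j, hj₀j, hj⟩ := frequently_atTop.1 ha j₀
  obtain ⟨i, hi, rfl⟩ := hw.exists_ge_length_eq hj
  have : (catPrefix x y j₀).length ≤ (catPrefix x y j).length :=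
    monotone_length_catPrefix x y hj₀j
  exact ⟨i, rfl, by omega⟩

theorem parikhInf_eq_maskAdd [DecidableEq A] (hw : IsOmegaConcat x y w) {N : ℕ} {Γ : Set A}
    (hN : ∀ j, N ≤ j → ∀ a ∈ y j, a ∈ Γ) (hΓ : ∀ a ∈ Γ, ∃ᶠ j in atTop, a ∈ y j) :
    parikhInf w = maskAdd (parikhFin (catPrefix x y N)) (maskOf Γ) := by
  funext a
  by_cases ha : a ∈ Γ
  · simp [hw.parikhInf_eq_top (hΓ a ha), maskAdd, maskOf, ha]
  · have hcount := hw.parikhInf_eq_count fun j hj h => ha (hN j hj a h)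
    simp [hcount, maskAdd, maskOf, parikhFin, ha]

end IsOmegaConcat

theorem exists_maskAdd_of_inOmegaCat [Finite A] [DecidableEq A] {S T : Language A} {w : ℕ → A}
    (hw : InOmegaCat S T w) :
    ∃ z ∈ S * KStar.kstar T, ∃ m ∈ ITset T, parikhInf w = maskAdd (parikhFin z) m := by
  obtain ⟨x, y, hx, hy, hw⟩ := inOmegaCat_iff.1 hw
  set Γ : Set A := {a | ∃ᶠ j in atTop, a ∈ y j}
  obtain ⟨N, hN⟩ : ∃ N, ∀ j, N ≤ j → ∀ a ∈ y j, a ∈ Γ := by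
    have : ∀ᶠ j in atTop, ∀ a, a ∉ Γ → a ∉ y j :=
      eventually_all.2 fun a => by
        by_cases ha : a ∈ Γ
        · simp [ha]
        · exact (not_frequently.1 ha).mono fun _ h _ => h
    obtain ⟨N, hN⟩ := eventually_atTop.1 this
    exact ⟨N, fun j hj a h => by_contra fun ha => hN j hj a ha h⟩
  have hΓ : Γ.Nonempty := by
    obtain ⟨j, hj, hne⟩ := frequently_atTop.1 ((unbounded_length_catPrefix_iff x y).1 hw.1) N
    obtain ⟨a, ha⟩ := List.exists_mem_of_ne_nil _ hne
    exact ⟨a, hN j hj a ha⟩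
  refine ⟨_, catPrefix_mem_mul_kstar hx hy N, maskOf Γ, ⟨Γ, hΓ, rfl, fun a ha => ?_⟩,
    hw.parikhInf_eq_maskAdd hN fun _ => id⟩
  obtain ⟨j, hj, haj⟩ := frequently_atTop.1 ha N
  exact ⟨y j, hy j, hN j hj, haj⟩

theorem exists_inOmegaCat_of_maskAdd [Countable A] [DecidableEq A] {S T : Language A}
    {z : List A} {m : A → ℕ∞} (hz : z ∈ S * KStar.kstar T) (hm : m ∈ ITset T) :
    ∃ w, InOmegaCat S T w ∧ parikhInf w = maskAdd (parikhFin z) m := by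
  obtain ⟨x, hx, _, hstar, rfl⟩ := Language.mem_mul.1 hz
  obtain ⟨L, rfl, hL⟩ := Language.mem_kstar.1 hstar
  obtain ⟨Γ, ⟨a₀, ha₀⟩, rfl, ht⟩ := hm
  choose t htT htΓ hta using ht
  have : Nonempty Γ := ⟨⟨a₀, ha₀⟩⟩
  obtain ⟨c, hc⟩ := exists_nat_forall_frequently_eq Γ
  let y : ℕ → List A := fun j => if h : j < L.length then L[j] else t _ (c (j - L.length)).2
  have hyT : ∀ j, y j ∈ T := fun j => by
    by_cases h : j < L.length
    · simpa [y, h] using hL _ (List.getElem_mem h)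
    · simpa [y, h] using htT _ _
  have hyΓ : ∀ j, L.length ≤ j → ∀ a ∈ y j, a ∈ Γ := fun j hj a ha => by
    simp only [y, dif_neg (not_lt.2 hj)] at ha
    exact htΓ _ _ a ha
  have hyfreq : ∀ a ∈ Γ, ∃ᶠ j in atTop, a ∈ y j := fun a ha =>
    frequently_atTop.2 fun n => by
      obtain ⟨k, hk, hck⟩ := frequently_atTop.1 (hc ⟨a, ha⟩) n
      refine ⟨k + L.length, by omega, ?_⟩
      simpa [y, hck] using hta a ha
  have hprefix : catPrefix x y L.length = x ++ L.flatten := by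
    rw [catPrefix_eq_append_flatten]
    congr 2
    exact List.ext_getElem (by simp) fun j hj _ => by simp_all [y]
  obtain ⟨w, hw⟩ := exists_isOmegaConcat ((unbounded_length_catPrefix_iff x y).2
    ((hyfreq a₀ ha₀).mono fun _ => List.ne_nil_of_mem))
  refine ⟨w, inOmegaCat_iff.2 ⟨x, y, hx, hyT, hw⟩, ?_⟩
  rw [hw.parikhInf_eq_maskAdd hyΓ hyfreq, hprefix]

/-- `Ψ(S·T^ω) = Ψ(S·T^*) + I(T)`. -/
theorem parikh_omega_cat (A : Type) [Fintype A] [DecidableEq A] (S T : Language A) :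
    parikhInf '' {w : ℕ → A | InOmegaCat S T w} =
      {v | ∃ y ∈ S * (KStar.kstar T), ∃ m ∈ ITset T, v = maskAdd (parikhFin y) m} := by
  ext v
  constructor
  · rintro ⟨w, hw, rfl⟩
    exact exists_maskAdd_of_inOmegaCat hw
  · rintro ⟨z, hz, m, hm, rfl⟩
    exact exists_inOmegaCat_of_maskAdd hz hm
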